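/- Let Δ be a Delta-operator on an implication algebra M. For u ≤ w, the map α(x) = x ∨ Δ(w,u) is an order isomorphism from {x ∈ [u,w] : Δ(x,u) = u} onto {y ∈ [u,w] : Δ(w,y) = y}, with inverse y ↦ y ∧ δ(u), where δ(u) is the largest element x ≥ u with Δ(x,u) = u. -/
import Mathlib


/-- An implication algebra: a join-semilattice with greatest element 1 in which
every interval [a,1] is a Boolean algebra, with `imp b a` (written b → a) the
relative complement of b over a. It satisfies (x→y)→y = x ⊔ y and
x→(y→z) = y→(x→z), and for a ≤ b, b → a is the complement of b in [a,1]. -/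
class ImplicationAlgebra (α : Type*) extends SemilatticeSup α, OrderTop α where
  imp : α → α → α
  imp_imp : ∀ a b : α, imp (imp a b) b = a ⊔ b
  exchange : ∀ a b c : α, imp a (imp b c) = imp b (imp a c)
  imp_glb : ∀ a b : α, a ≤ b → IsGLB {b, imp b a} a
  imp_sup : ∀ a b : α, a ≤ b → b ⊔ imp b a = ⊤

open ImplicationAlgebra

/-- A Delta-operator on an implication algebra: a (partial, here totalized)
binary operation Δ(b,a), meaningful for a ≤ b, satisfying the axioms of
Definition 3.1: Δ(b,a) ≤ b; Δ(a,a) = a; Δ(b,Δ(b,a)) = a; monotonicity in the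
second argument; Δ(c,Δ(b,a)) = Δ(Δ(c,b),Δ(c,a)); for a < b either Δ(b,a) = a
or Δ(b,a) and a have no lower bound; and Δ(b,a) = b ∧ Δ(1, b → a). -/
structure IsDeltaOperator {α : Type*} [ImplicationAlgebra α] (D : α → α → α) : Prop where
  delta_le : ∀ a b : α, a ≤ b → D b a ≤ b
  delta_refl : ∀ a : α, D a a = a
  delta_delta : ∀ a b : α, a ≤ b → D b (D b a) = a
  delta_mono : ∀ a b c : α, a ≤ b → b ≤ c → D c a ≤ D c b
  delta_comm : ∀ a b c : α, a ≤ b → b ≤ c → D c (D b a) = D (D c b) (D c a)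
  delta_dichot : ∀ a b : α, a < b → D b a = a ∨ ¬∃ p, p ≤ a ∧ p ≤ D b a
  delta_meet : ∀ a b : α, a ≤ b → IsGLB {b, D ⊤ (imp b a)} (D b a)

/-- δ(u) = (u ∨ Δ(1,u)) → u, the largest x ≥ u with Δ(x,u) = u. -/
noncomputable def deltaHat {α : Type*} [ImplicationAlgebra α] (D : α → α → α) (u : α) : α :=
  ImplicationAlgebra.imp (u ⊔ D ⊤ u) u

section Helpers

variable {α : Type*} [ImplicationAlgebra α]

private lemma mem_pair_left {a b : α} : a ∈ ({a, b} : Set α) := Set.mem_insert _ _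
private lemma mem_pair_right {a b : α} : b ∈ ({a, b} : Set α) := Set.mem_insert_of_mem _ rfl

private lemma lb_pair {a b p : α} (h1 : p ≤ a) (h2 : p ≤ b) :
    p ∈ lowerBounds ({a, b} : Set α) := by
  intro c hc
  simp only [Set.mem_insert_iff, Set.mem_singleton_iff] at hc
  rcases hc with rfl | rfl
  · exact h1
  · exact h2

private lemma glb_le_l {a b m : α} (h : IsGLB ({a, b} : Set α) m) : m ≤ a :=
  h.1 mem_pair_left

private lemma glb_le_r {a b m : α} (h : IsGLB ({a, b} : Set α) m) : m ≤ b :=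
  h.1 mem_pair_right

private lemma le_glb {a b m p : α} (h : IsGLB ({a, b} : Set α) m)
    (h1 : p ≤ a) (h2 : p ≤ b) : p ≤ m :=
  h.2 (lb_pair h1 h2)

/-! ### Basic implication algebra facts -/

private lemma top_imp (b : α) : imp ⊤ b = b := by
  have h := imp_glb b ⊤ le_top
  exact le_antisymm (h.2 (lb_pair le_top le_rfl)) (glb_le_r h)

private lemma imp_self' (b : α) : imp b b = ⊤ := by
  have h1 : b ≤ imp b b := glb_le_r (imp_glb b b le_rfl)
  have h2 := imp_sup b b le_rfl
  rwa [sup_eq_right.mpr h1] at h2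

private lemma le_of_imp_top {a b : α} (h : imp a b = ⊤) : a ≤ b := by
  have h1 := imp_imp a b
  rw [h, top_imp] at h1
  exact le_sup_left.trans h1.ge

private lemma imp_top' (a : α) : imp a ⊤ = ⊤ := by
  have ht : imp (imp a ⊤) ⊤ = ⊤ := by rw [imp_imp]; simp
  calc imp a ⊤ = imp a (imp (imp a ⊤) ⊤) := by rw [ht]
    _ = imp (imp a ⊤) (imp a ⊤) := exchange _ _ _
    _ = ⊤ := imp_self' _

private lemma le_imp' (b a : α) : b ≤ imp a b := by
  apply le_of_imp_top
  rw [exchange, imp_self', imp_top']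

private lemma imp_of_le {a b : α} (h : a ≤ b) : imp a b = ⊤ := by
  have h1 : imp (imp a b) b = b := by rw [imp_imp]; exact sup_eq_right.mpr h
  have h2 : imp (imp (imp a b) b) b = imp a b ⊔ b := imp_imp _ _
  rw [h1, imp_self'] at h2
  rw [sup_eq_left.mpr (le_imp' b a)] at h2
  exact h2.symm

private lemma imp_le_imp_left {x y z : α} (h : x ≤ y) : imp y z ≤ imp x z := by
  apply le_of_imp_top
  rw [exchange, imp_imp]
  exact imp_of_le (h.trans le_sup_left)

private lemma imp_le_imp_right {a b c : α} (h : a ≤ b) : imp c a ≤ imp c b := by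
  apply le_of_imp_top
  have hb : imp (imp b a) a = b := by rw [imp_imp]; exact sup_eq_left.mpr h
  calc imp (imp c a) (imp c b)
      = imp c (imp (imp c a) b) := exchange _ _ _
    _ = imp c (imp (imp c a) (imp (imp b a) a)) := by rw [hb]
    _ = imp c (imp (imp b a) (imp (imp c a) a)) := by rw [exchange (imp c a) (imp b a) a]
    _ = imp c (imp (imp b a) (c ⊔ a)) := by rw [imp_imp]
    _ = imp (imp b a) (imp c (c ⊔ a)) := exchange _ _ _
    _ = imp (imp b a) ⊤ := by rw [imp_of_le (le_sup_left : c ≤ c ⊔ a)]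
    _ = ⊤ := imp_top' _

private lemma imp_imp_self {v X : α} (h : v ≤ X) : imp (imp X v) v = X := by
  rw [imp_imp]; exact sup_eq_left.mpr h

private lemma cp {u S P : α} (hS : u ≤ S) (h : P ≤ imp S u) : S ≤ imp P u := by
  have h1 := imp_le_imp_left (z := u) h
  rwa [imp_imp_self hS] at h1

private lemma cl {v X J : α} (hX : v ≤ X) (hJ : v ≤ J) (h : X ⊔ J = ⊤) : imp X v ≤ J := by
  have h1 : imp J X = X := by
    have h2 : imp (imp J X) X = ⊤ := by rw [imp_imp, sup_comm]; exact h
    exact le_antisymm (le_of_imp_top h2) (le_imp' _ _)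
  have h3 : imp J v ≤ X := by
    have := imp_le_imp_right (c := J) hX
    rwa [h1] at this
  have h4 := imp_le_imp_left (z := v) h3
  rwa [imp_imp_self hJ] at h4

/-- Relative meet: the greatest lower bound of `X` and `J`, both above `v`. -/
private noncomputable def pmeet (v X J : α) : α := imp (imp X v ⊔ imp J v) v

private lemma pmeet_isGLB {v X J : α} (hX : v ≤ X) (hJ : v ≤ J) :
    IsGLB ({X, J} : Set α) (pmeet v X J) := by
  constructor
  · apply lb_pair
    · calc pmeet v X J ≤ imp (imp X v) v := imp_le_imp_left le_sup_left
        _ = X := imp_imp_self hX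
    · calc pmeet v X J ≤ imp (imp J v) v := imp_le_imp_left le_sup_right
        _ = J := imp_imp_self hJ
  · intro p hp
    have hpX : p ≤ X := hp mem_pair_left
    have hpJ : p ≤ J := hp mem_pair_right
    have h1 : imp X v ⊔ imp J v ≤ imp (p ⊔ v) v :=
      sup_le (imp_le_imp_left (sup_le hpX hX)) (imp_le_imp_left (sup_le hpJ hJ))
    have h2 : imp (imp (p ⊔ v) v) v ≤ pmeet v X J := imp_le_imp_left h1
    rw [imp_imp_self (le_sup_right : v ≤ p ⊔ v)] at h2
    exact le_sup_left.trans h2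

private lemma imp_glb_eq {v X J m : α} (hX : v ≤ X) (hJ : v ≤ J)
    (hm : IsGLB ({X, J} : Set α) m) : imp m v = imp X v ⊔ imp J v := by
  have he : m = pmeet v X J := hm.unique (pmeet_isGLB hX hJ)
  rw [he]
  exact imp_imp_self ((le_imp' v X).trans le_sup_left)

private lemma imp_sup_isGLB {v X J : α} (hX : v ≤ X) (hJ : v ≤ J) :
    IsGLB ({imp X v, imp J v} : Set α) (imp (X ⊔ J) v) := by
  constructor
  · exact lb_pair (imp_le_imp_left le_sup_left) (imp_le_imp_left le_sup_right)
  · intro p hp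
    have hpX : p ≤ imp X v := hp mem_pair_left
    have hpJ : p ≤ imp J v := hp mem_pair_right
    have h1 : X ≤ imp (p ⊔ v) v := cp hX (sup_le hpX (le_imp' v X))
    have h2 : J ≤ imp (p ⊔ v) v := cp hJ (sup_le hpJ (le_imp' v J))
    have h4 : p ⊔ v ≤ imp (X ⊔ J) v := cp (le_sup_right : v ≤ p ⊔ v) (sup_le h1 h2)
    exact le_sup_left.trans h4

private lemma pseudo {v X J : α} (hX : v ≤ X) (hJ : v ≤ J)
    (hG : IsGLB ({X, J} : Set α) v) : J ≤ imp X v := by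
  have h1 : imp X v ⊔ imp J v = ⊤ := by
    have h2 := imp_glb_eq hX hJ hG
    rw [imp_self'] at h2
    exact h2.symm
  have h3 := cl (le_imp' v J) (le_imp' v X) (by rw [sup_comm]; exact h1)
  rwa [imp_imp_self hJ] at h3

private lemma split_le {v P j A B : α} (hP : v ≤ P) (hj : v ≤ j)
    (hA : IsGLB ({P, j} : Set α) A) (hB : IsGLB ({P, imp j v} : Set α) B) :
    P ≤ A ⊔ B := by
  have hvg : v ≤ A ⊔ B := (le_glb hA hP hj).trans le_sup_left
  have hGLBh : IsGLB ({P, imp (A ⊔ B) v} : Set α) (pmeet v P (imp (A ⊔ B) v)) :=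
    pmeet_isGLB hP (le_imp' v _)
  set h := pmeet v P (imp (A ⊔ B) v) with hhdef
  have hhP : h ≤ P := glb_le_l hGLBh
  have hhg : h ≤ imp (A ⊔ B) v := glb_le_r hGLBh
  have hvh : v ≤ h := le_glb hGLBh hP (le_imp' v _)
  -- first auxiliary meet
  have hm₁ : IsGLB ({h, j} : Set α) (pmeet v h j) := pmeet_isGLB hvh hj
  have hm₁v : pmeet v h j ≤ v := by
    have l1 : pmeet v h j ≤ A := le_glb hA ((glb_le_l hm₁).trans hhP) (glb_le_r hm₁)
    exact le_glb (imp_glb v (A ⊔ B) hvg) (l1.trans le_sup_left) ((glb_le_l hm₁).trans hhg)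
  have hm₁_eq : IsGLB ({h, j} : Set α) v := by
    have he : pmeet v h j = v := le_antisymm hm₁v (le_glb hm₁ hvh hj)
    rwa [he] at hm₁
  have h_le_cj : h ≤ imp j v := pseudo hj hvh (by rwa [Set.pair_comm] at hm₁_eq)
  -- second auxiliary meet
  have hm₂ : IsGLB ({h, imp j v} : Set α) (pmeet v h (imp j v)) :=
    pmeet_isGLB hvh (le_imp' v j)
  have hm₂v : pmeet v h (imp j v) ≤ v := by
    have l1 : pmeet v h (imp j v) ≤ B :=
      le_glb hB ((glb_le_l hm₂).trans hhP) (glb_le_r hm₂)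
    exact le_glb (imp_glb v (A ⊔ B) hvg) (l1.trans le_sup_right) ((glb_le_l hm₂).trans hhg)
  have hm₂_eq : IsGLB ({h, imp j v} : Set α) v := by
    have he : pmeet v h (imp j v) = v := le_antisymm hm₂v (le_glb hm₂ hvh (le_imp' v j))
    rwa [he] at hm₂
  have h_le_j : h ≤ j := by
    have hj2 := pseudo (le_imp' v j) hvh (by rwa [Set.pair_comm] at hm₂_eq)
    rwa [imp_imp_self hj] at hj2
  have h_le_v : h ≤ v := le_glb (imp_glb v j hj) h_le_j h_le_cj
  have h_eq : IsGLB ({P, imp (A ⊔ B) v} : Set α) v := by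
    have he : h = v := le_antisymm h_le_v hvh
    rwa [he] at hGLBh
  have hfin : P ≤ imp (imp (A ⊔ B) v) v :=
    pseudo (le_imp' v _) hP (by rwa [Set.pair_comm] at h_eq)
  rwa [imp_imp_self hvg] at hfin

private lemma imp_le_imp_sup {a q Y : α} (haq : a ≤ q) (haY : a ≤ Y) :
    imp q Y ≤ imp q a ⊔ Y := by
  have h1 : imp (imp q a) (q ⊔ Y) ≤ q ⊔ Y := by
    apply le_of_imp_top
    rw [imp_imp]
    have h2 := imp_sup a q haq
    apply top_unique
    rw [← h2]
    exact sup_le (le_sup_left.trans le_sup_right) le_sup_left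
  have h3 : imp (imp q a) Y ≤ q ⊔ Y :=
    (imp_le_imp_right (le_sup_right : Y ≤ q ⊔ Y)).trans h1
  apply le_of_imp_top
  have h4 : imp q a ⊔ Y = imp (imp (imp q a) Y) Y := (imp_imp _ _).symm
  rw [h4, exchange (imp q Y) (imp (imp q a) Y) Y, imp_imp]
  exact imp_of_le h3

end Helpers

section DeltaHelpers

variable {α : Type*} [ImplicationAlgebra α] {D : α → α → α}

private lemma t_mono (hD : IsDeltaOperator D) {a b : α} (h : a ≤ b) : D ⊤ a ≤ D ⊤ b :=
  hD.delta_mono a b ⊤ h le_top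

private lemma t_invol (hD : IsDeltaOperator D) (a : α) : D ⊤ (D ⊤ a) = a :=
  hD.delta_delta a ⊤ le_top

private lemma t_le_iff' (hD : IsDeltaOperator D) {a X : α} : D ⊤ a ≤ X ↔ a ≤ D ⊤ X := by
  constructor
  · intro h
    have h1 := t_mono hD h
    rwa [t_invol hD] at h1
  · intro h
    have h1 := t_mono hD h
    rwa [t_invol hD] at h1

private lemma t_top (hD : IsDeltaOperator D) : D ⊤ (⊤ : α) = ⊤ := hD.delta_refl ⊤

private lemma t_sup (hD : IsDeltaOperator D) (a b : α) :
    D ⊤ (a ⊔ b) = D ⊤ a ⊔ D ⊤ b := by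
  apply le_antisymm
  · rw [t_le_iff' hD]
    exact sup_le ((t_le_iff' hD).mp le_sup_left) ((t_le_iff' hD).mp le_sup_right)
  · exact sup_le (t_mono hD le_sup_left) (t_mono hD le_sup_right)

private lemma t_glb (hD : IsDeltaOperator D) {X J m : α} (h : IsGLB ({X, J} : Set α) m) :
    IsGLB ({D ⊤ X, D ⊤ J} : Set α) (D ⊤ m) := by
  constructor
  · exact lb_pair (t_mono hD (glb_le_l h)) (t_mono hD (glb_le_r h))
  · intro p hp
    have h1 : D ⊤ p ≤ X := (t_le_iff' hD).mpr (hp mem_pair_left)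
    have h2 : D ⊤ p ≤ J := (t_le_iff' hD).mpr (hp mem_pair_right)
    exact (t_le_iff' hD).mp (le_glb h h1 h2)

private lemma t_hom (hD : IsDeltaOperator D) {a b : α} (h : a ≤ b) :
    D ⊤ (imp b a) = imp (D ⊤ b) (D ⊤ a) := by
  have hTa : D ⊤ a ≤ D ⊤ b := t_mono hD h
  have hglb : IsGLB ({D ⊤ b, D ⊤ (imp b a)} : Set α) (D ⊤ a) := t_glb hD (imp_glb a b h)
  have hsup : D ⊤ b ⊔ D ⊤ (imp b a) = ⊤ := by
    rw [← t_sup hD, imp_sup a b h, t_top hD]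
  have hab : D ⊤ a ≤ D ⊤ (imp b a) := t_mono hD (glb_le_r (imp_glb a b h))
  exact le_antisymm (pseudo hTa hab hglb) (cl hTa hab hsup)

private lemma fix_iff (hD : IsDeltaOperator D) {u x : α} (hux : u ≤ x) :
    D x u = u ↔ x ≤ deltaHat D u := by
  constructor
  · intro h
    have hglb := hD.delta_meet u x hux
    rw [h] at hglb
    have h1 : u ≤ D ⊤ (imp x u) := glb_le_r hglb
    have h2 : D ⊤ u ≤ imp x u := (t_le_iff' hD).mpr h1
    have h3 : u ⊔ D ⊤ u ≤ imp x u := sup_le (le_imp' u x) h2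
    exact cp hux h3
  · intro h
    have h3 : u ⊔ D ⊤ u ≤ imp x u := cp (le_sup_left : u ≤ u ⊔ D ⊤ u) h
    have h1 : u ≤ D ⊤ (imp x u) := (t_le_iff' hD).mp (le_sup_right.trans h3)
    have hglb := hD.delta_meet u x hux
    have h4 : u ≤ D x u := le_glb hglb hux h1
    have h5 : D x u ≤ D x (D x u) := hD.delta_mono u (D x u) x h4 (hD.delta_le u x hux)
    rw [hD.delta_delta u x hux] at h5
    exact le_antisymm h5 h4

private lemma td_le (hD : IsDeltaOperator D) {u w : α} (huw : u ≤ w) :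
    D ⊤ (D w u) ≤ imp (D w u) u := by
  have e1 : D ⊤ (D w u) = D (D ⊤ w) (D ⊤ u) := hD.delta_comm u w ⊤ huw le_top
  have hTuw : D ⊤ u ≤ D ⊤ w := t_mono hD huw
  have hglb := hD.delta_meet (D ⊤ u) (D ⊤ w) hTuw
  have h1 : D (D ⊤ w) (D ⊤ u) ≤ D ⊤ (imp (D ⊤ w) (D ⊤ u)) := glb_le_r hglb
  have h2 : D ⊤ (imp (D ⊤ w) (D ⊤ u)) = imp w u := by
    rw [t_hom hD hTuw, t_invol hD, t_invol hD]
  rw [e1]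
  calc D (D ⊤ w) (D ⊤ u) ≤ imp w u := by rw [← h2]; exact h1
    _ ≤ imp (D w u) u := imp_le_imp_left (hD.delta_le u w huw)

private lemma master (hD : IsDeltaOperator D) {u w p : α} (huw : u ≤ w)
    (h1 : p ≤ deltaHat D u) (h2 : p ≤ u ⊔ D w u) : p ≤ u := by
  have hδdef : deltaHat D u = imp (u ⊔ D ⊤ u) u := rfl
  have huδ : u ≤ deltaHat D u := le_imp' u _
  have hud : u ≤ u ⊔ D w u := le_sup_left
  have hr : IsGLB ({deltaHat D u, u ⊔ D w u} : Set α)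
      (pmeet u (deltaHat D u) (u ⊔ D w u)) := pmeet_isGLB huδ hud
  set r := pmeet u (deltaHat D u) (u ⊔ D w u) with hrdef
  have hpr : p ≤ r := le_glb hr h1 h2
  have hur : u ≤ r := le_glb hr huδ hud
  have hcz : imp (u ⊔ D w u) u = imp (D w u) u ⊔ u := by
    rw [sup_comm u (D w u)]
    conv_lhs => rw [← imp_imp (D w u) u]
    exact imp_imp _ _
  have hcδ : imp (deltaHat D u) u = u ⊔ D ⊤ u := by
    rw [hδdef]; exact imp_imp_self le_sup_left
  have hcr : imp r u = imp (deltaHat D u) u ⊔ imp (u ⊔ D w u) u := imp_glb_eq huδ hud hr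
  have hTr : D ⊤ r ≤ imp r u := by
    have l1 : D ⊤ r ≤ D ⊤ u ⊔ D ⊤ (D w u) := by
      rw [← t_sup hD]; exact t_mono hD (glb_le_r hr)
    rw [hcr, hcδ, hcz]
    refine l1.trans (sup_le ?_ ?_)
    · exact le_sup_right.trans le_sup_left
    · exact (td_le hD huw).trans (le_sup_left.trans le_sup_right)
  have hrT : r ≤ D ⊤ (imp r u) := (t_le_iff' hD).mp hTr
  have hglb2 := hD.delta_meet u r hur
  have h6 : r ≤ D r u := le_glb hglb2 le_rfl hrT
  have h7 : D r u = r := le_antisymm (hD.delta_le u r hur) h6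
  have h8 : D r u = u := (fix_iff hD hur).mpr (glb_le_l hr)
  have h9 : r = u := by rw [← h7, h8]
  exact hpr.trans h9.le

private lemma phi_le (hD : IsDeltaOperator D) {u w y : α} (huw : u ≤ w) (huy : u ≤ y)
    (hyw : y ≤ w) (hy : D w y = y) : y ≤ pmeet u y (deltaHat D u) ⊔ D w u := by
  have huδ : u ≤ deltaHat D u := le_imp' u _
  have hud : u ≤ u ⊔ D w u := le_sup_left
  have hxglb : IsGLB ({y, deltaHat D u} : Set α) (pmeet u y (deltaHat D u)) :=
    pmeet_isGLB huy huδ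
  set x := pmeet u y (deltaHat D u) with hxdef
  have hux : u ≤ x := le_glb hxglb huy huδ
  have hA : IsGLB ({y, u ⊔ D w u} : Set α) (pmeet u y (u ⊔ D w u)) := pmeet_isGLB huy hud
  have hB : IsGLB ({y, imp (u ⊔ D w u) u} : Set α) (pmeet u y (imp (u ⊔ D w u) u)) :=
    pmeet_isGLB huy (le_imp' u _)
  have hsplit := split_le huy hud hA hB
  have hBδ : pmeet u y (imp (u ⊔ D w u) u) ≤ deltaHat D u := by
    set B := pmeet u y (imp (u ⊔ D w u) u) with hBdef
    have huB : u ≤ B := le_glb hB huy (le_imp' u _)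
    have hcB : imp B u = imp y u ⊔ imp (imp (u ⊔ D w u) u) u :=
      imp_glb_eq huy (le_imp' u _) hB
    have hcc : imp (imp (u ⊔ D w u) u) u = u ⊔ D w u := imp_imp_self hud
    have hch : D ⊤ u ≤ imp y u ⊔ (u ⊔ D w u) := by
      have hdlew : D w u ≤ w := hD.delta_le u w huw
      have hDwd : D w (D w u) = u := hD.delta_delta u w huw
      have hglbd := hD.delta_meet (D w u) w hdlew
      rw [hDwd] at hglbd
      have l1 : u ≤ D ⊤ (imp w (D w u)) := glb_le_r hglbd
      have l2 : D ⊤ (imp w (D w u)) = imp (D ⊤ w) (D ⊤ (D w u)) := t_hom hD hdlew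
      have l3 : imp (D ⊤ w) (D ⊤ (D w u)) ≤ imp (D ⊤ y) (D ⊤ (D w u)) :=
        imp_le_imp_left (t_mono hD hyw)
      have l4 : imp (D ⊤ y) (D ⊤ (D w u)) ≤ imp (D ⊤ y) (D ⊤ u ⊔ D ⊤ (D w u)) :=
        imp_le_imp_right le_sup_right
      have l5 : imp (D ⊤ y) (D ⊤ u ⊔ D ⊤ (D w u)) ≤
          imp (D ⊤ y) (D ⊤ u) ⊔ (D ⊤ u ⊔ D ⊤ (D w u)) :=
        imp_le_imp_sup (t_mono hD huy) le_sup_left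
      have l6 : u ≤ imp (D ⊤ y) (D ⊤ u) ⊔ (D ⊤ u ⊔ D ⊤ (D w u)) := by
        rw [l2] at l1
        exact l1.trans (l3.trans (l4.trans l5))
      have l7 := t_mono hD l6
      rw [t_sup hD, t_sup hD, t_invol hD, t_invol hD] at l7
      have l8 : D ⊤ (imp (D ⊤ y) (D ⊤ u)) = imp y u := by
        rw [t_hom hD (t_mono hD huy), t_invol hD, t_invol hD]
      rwa [l8] at l7
    have hs_le : u ⊔ D ⊤ u ≤ imp B u := by
      rw [hcB, hcc]
      exact sup_le (le_sup_left.trans le_sup_right) hch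
    exact cp huB hs_le
  have hxb : pmeet u y (imp (u ⊔ D w u) u) ≤ x := le_glb hxglb (glb_le_l hB) hBδ
  calc y ≤ pmeet u y (u ⊔ D w u) ⊔ pmeet u y (imp (u ⊔ D w u) u) := hsplit
    _ ≤ (u ⊔ D w u) ⊔ x := sup_le_sup (glb_le_r hA) hxb
    _ ≤ x ⊔ D w u := sup_le (sup_le (hux.trans le_sup_left) le_sup_right) le_sup_left

end DeltaHelpers

/-- For a Delta-operator Δ on an implication algebra and u ≤ w, the map
α(x) = x ∨ Δ(w,u) is an order isomorphism from
Fix = {x ∈ [u,w] : Δ(x,u) = u} onto Φ = {y ∈ [u,w] : Δ(w,y) = y},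
with inverse y ↦ y ∧ δ(u). -/
theorem delta_fix_phi_orderIso {α : Type*} [ImplicationAlgebra α]
    (D : α → α → α) (hD : IsDeltaOperator D) (u w : α) (huw : u ≤ w) :
    (∀ x ∈ {x : α | u ≤ x ∧ x ≤ w ∧ D x u = u},
        x ⊔ D w u ∈ {y : α | u ≤ y ∧ y ≤ w ∧ D w y = y}) ∧
      (∀ x₁ ∈ {x : α | u ≤ x ∧ x ≤ w ∧ D x u = u},
        ∀ x₂ ∈ {x : α | u ≤ x ∧ x ≤ w ∧ D x u = u},
          (x₁ ≤ x₂ ↔ x₁ ⊔ D w u ≤ x₂ ⊔ D w u)) ∧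
      (∀ y ∈ {y : α | u ≤ y ∧ y ≤ w ∧ D w y = y},
        ∃ x ∈ {x : α | u ≤ x ∧ x ≤ w ∧ D x u = u},
          x ⊔ D w u = y ∧ IsGLB {y, deltaHat D u} x) := by
  refine ⟨?_, ?_, ?_⟩
  · -- Part 1: α maps Fix into Φ
    rintro x ⟨hux, hxw, _hfix⟩
    have hdw : D w u ≤ w := hD.delta_le u w huw
    have hxdw : x ⊔ D w u ≤ w := sup_le hxw hdw
    refine ⟨hux.trans le_sup_left, hxdw, ?_⟩
    have hu_le : u ≤ D w (x ⊔ D w u) := by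
      have h := hD.delta_mono (D w u) (x ⊔ D w u) w le_sup_right hxdw
      rwa [hD.delta_delta u w huw] at h
    rcases hxdw.lt_or_eq with hlt | heq
    · rcases hD.delta_dichot _ _ hlt with h | h
      · exact h
      · exact absurd ⟨u, hux.trans le_sup_left, hu_le⟩ h
    · rw [heq]; exact hD.delta_refl w
  · -- Part 2: α is an order embedding
    rintro x₁ ⟨hux₁, hx₁w, hfix₁⟩ x₂ ⟨hux₂, hx₂w, hfix₂⟩
    constructor
    · exact fun h => sup_le_sup_right h _
    · intro h
      have hδ₁ : x₁ ≤ deltaHat D u := (fix_iff hD hux₁).mp hfix₁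
      have hA : IsGLB ({x₁, x₂} : Set α) (pmeet u x₁ x₂) := pmeet_isGLB hux₁ hux₂
      have hB : IsGLB ({x₁, imp x₂ u} : Set α) (pmeet u x₁ (imp x₂ u)) :=
        pmeet_isGLB hux₁ (le_imp' u _)
      have hsplit := split_le hux₁ hux₂ hA hB
      have huz' : u ≤ u ⊔ D w u := le_sup_left
      have huz₂ : u ≤ x₂ ⊔ D w u := hux₂.trans le_sup_left
      have hz₂ : x₂ ⊔ (u ⊔ D w u) = x₂ ⊔ D w u := by
        rw [← sup_assoc, sup_eq_left.mpr hux₂]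
      have hK : IsGLB ({x₂ ⊔ D w u, imp x₂ u} : Set α)
          (pmeet u (x₂ ⊔ D w u) (imp x₂ u)) := pmeet_isGLB huz₂ (le_imp' u _)
      set K := pmeet u (x₂ ⊔ D w u) (imp x₂ u) with hKdef
      have huK : u ≤ K := le_glb hK huz₂ (le_imp' u _)
      have hBK : pmeet u x₁ (imp x₂ u) ≤ K :=
        le_glb hK ((glb_le_l hB).trans (le_sup_left.trans h)) (glb_le_r hB)
      have hKz : K ≤ u ⊔ D w u := by
        have hK1 : IsGLB ({K, u ⊔ D w u} : Set α) (pmeet u K (u ⊔ D w u)) :=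
          pmeet_isGLB huK huz'
        have hK2 : IsGLB ({K, imp (u ⊔ D w u) u} : Set α)
            (pmeet u K (imp (u ⊔ D w u) u)) := pmeet_isGLB huK (le_imp' u _)
        have hsplitK := split_le huK huz' hK1 hK2
        have hglb_z₂ : IsGLB ({imp x₂ u, imp (u ⊔ D w u) u} : Set α)
            (imp (x₂ ⊔ (u ⊔ D w u)) u) := imp_sup_isGLB hux₂ huz'
        have hK2u : pmeet u K (imp (u ⊔ D w u) u) ≤ u := by
          have e1 : pmeet u K (imp (u ⊔ D w u) u) ≤ imp x₂ u :=
            (glb_le_l hK2).trans (glb_le_r hK)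
          have e2 : pmeet u K (imp (u ⊔ D w u) u) ≤ imp (u ⊔ D w u) u := glb_le_r hK2
          have e3 : pmeet u K (imp (u ⊔ D w u) u) ≤ imp (x₂ ⊔ D w u) u := by
            have e := le_glb hglb_z₂ e1 e2
            rwa [hz₂] at e
          have e4 : pmeet u K (imp (u ⊔ D w u) u) ≤ x₂ ⊔ D w u :=
            (glb_le_l hK2).trans (glb_le_l hK)
          exact le_glb (imp_glb u (x₂ ⊔ D w u) huz₂) e4 e3
        calc K ≤ pmeet u K (u ⊔ D w u) ⊔ pmeet u K (imp (u ⊔ D w u) u) := hsplitK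
          _ ≤ (u ⊔ D w u) ⊔ u := sup_le_sup (glb_le_r hK1) hK2u
          _ ≤ u ⊔ D w u := sup_le le_rfl le_sup_left
      have hBu : pmeet u x₁ (imp x₂ u) ≤ u :=
        master hD huw ((glb_le_l hB).trans hδ₁) (hBK.trans hKz)
      calc x₁ ≤ pmeet u x₁ x₂ ⊔ pmeet u x₁ (imp x₂ u) := hsplit
        _ ≤ x₂ := sup_le (glb_le_r hA) (hBu.trans hux₂)
  · -- Part 3: surjectivity with inverse y ↦ y ∧ δ(u)
    rintro y ⟨huy, hyw, hphi⟩
    have huδ : u ≤ deltaHat D u := le_imp' u _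
    have hxglb : IsGLB ({y, deltaHat D u} : Set α) (pmeet u y (deltaHat D u)) :=
      pmeet_isGLB huy huδ
    have hux : u ≤ pmeet u y (deltaHat D u) := le_glb hxglb huy huδ
    have hxy : pmeet u y (deltaHat D u) ≤ y := glb_le_l hxglb
    have hxδ : pmeet u y (deltaHat D u) ≤ deltaHat D u := glb_le_r hxglb
    have hdy : D w u ≤ y := by
      have h := hD.delta_mono u y w huy hyw
      rwa [hphi] at h
    exact ⟨pmeet u y (deltaHat D u), ⟨hux, hxy.trans hyw, (fix_iff hD hux).mpr hxδ⟩,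
      le_antisymm (sup_le hxy hdy) (phi_le hD huw huy hyw hphi), hxglb⟩
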